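/- Let 𝒜 be an abelian length category with length function ℓ and Gabriel-Roiter measure μ = ℓ*. If X₁ ⊂ X₂ ⊂ ⋯ ⊂ X_n = X is a Gabriel-Roiter filtration of the indecomposable object X (X₁ simple, and each X_{i-1} a Gabriel-Roiter predecessor of X_i, i.e., μ(X_{i-1}) = max over proper indecomposable subobjects Y' ⊂ X_i of μ(Y')), then μ(X) = {ℓ(X_i) | 1 ≤ i ≤ n} as an element of Ch(ℝ). -/

import Mathlib

/-!
If `Y` is a Gabriel-Roiter predecessor of `X`, then `μ X = μ Y ∪ {ℓ X}`. Every length in `μ Y`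
is at most `ℓ Y < ℓ X`, so both sides compare as chains after removing their common top `ℓ X`.
The chain realising `μ Y`, extended by `X`, is a chain ending in `X`, which gives `≥`. Conversely,
the chain realising `μ X`, stripped of `X`, is a chain ending in a proper indecomposable
subobject `Y'` of `X`, so it is bounded by `μ Y' ≤ μ Y`. The theorem follows by induction
along the filtration, starting from `μ S = {ℓ S}` for simple `S`.
-/

open CategoryTheory CategoryTheory.Limits

/-- The lexicographic order on finite chains (here: finite subsets of a linear order):
`X ≤ Y` iff `min (Y \ X) ≤ min (X \ Y)`, with the convention `max ∅ < x < min ∅`. -/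
def lexLE {T : Type*} [PartialOrder T] [DecidableEq T] (X Y : Finset T) : Prop :=
  X \ Y = ∅ ∨ ∃ b ∈ Y \ X, ∀ a ∈ X \ Y, b ≤ a

def lexLT {T : Type*} [PartialOrder T] [DecidableEq T] (X Y : Finset T) : Prop :=
  lexLE X Y ∧ ¬ lexLE Y X

universe v u

variable (C : Type u) [Category.{v} C] [Abelian C]

/-- The abelian category is a length category: every object is artinian and noetherian,
i.e. its subobject lattice satisfies both chain conditions (equivalently, every object
has a finite composition series). -/
def IsLengthCategory : Prop :=
  ∀ X : C, WellFoundedLT (Subobject X) ∧ WellFoundedGT (Subobject X)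

variable {C}

/-- `X` is (isomorphic to) a subobject of `Y`. -/
def SubOf (X Y : C) : Prop := ∃ f : X ⟶ Y, Mono f

/-- `X` is a proper subobject of `Y` (strict order on the poset of isoclasses of
indecomposables ordered by the subobject relation). -/
def StrictSubOf (X Y : C) : Prop := SubOf X Y ∧ ¬ SubOf Y X

/-- `X` is indecomposable: nonzero, and any biproduct decomposition has a zero summand. -/
def Indec (X : C) : Prop :=
  ¬ IsZero X ∧ ∀ A B : C, Nonempty (X ≅ A ⊞ B) → IsZero A ∨ IsZero B

/-- A length function on an abelian length category: real-valued, nonnegative, zero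
exactly on zero objects, and additive on short exact sequences. -/
def IsLengthFunctionCat (l : C → ℝ) : Prop :=
  (∀ X : C, 0 ≤ l X) ∧ (∀ X : C, l X = 0 ↔ IsZero X) ∧
  (∀ Sc : ShortComplex C, Sc.ShortExact → l Sc.X₂ = l Sc.X₁ + l Sc.X₃)

/-- `μ` is the Gabriel-Roiter measure `ℓ*` with respect to `l`: for each
indecomposable `X`, `μ X ∈ Ch(ℝ)` is the lexicographic maximum of the sets
`{l X₁, …, l Xₙ}` over all chains `X₁ ⊂ X₂ ⊂ ⋯ ⊂ Xₙ = X` of indecomposable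
subobjects of `X`. -/
def IsGRMeasure (l : C → ℝ) (μ : C → Finset ℝ) : Prop :=
  ∀ X : C, Indec X →
    (∃ (n : ℕ) (Z : Fin (n + 1) → C), (∀ i, Indec (Z i)) ∧
      (∀ i j : Fin (n + 1), i < j → StrictSubOf (Z i) (Z j)) ∧ Z (Fin.last n) = X ∧
      μ X = Finset.univ.image fun i => l (Z i)) ∧
    (∀ (n : ℕ) (Z : Fin (n + 1) → C), (∀ i, Indec (Z i)) →
      (∀ i j : Fin (n + 1), i < j → StrictSubOf (Z i) (Z j)) → Z (Fin.last n) = X →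
      lexLE (Finset.univ.image fun i => l (Z i)) (μ X))

section Lex

open Finset

variable {T : Type*} [LinearOrder T] {X Y W S U : Finset T} {c : T}

lemma lexLE_iff_toColex_le :
    lexLE X Y ↔ toColex (X.map OrderDual.toDual.toEmbedding) ≤
      toColex (Y.map OrderDual.toDual.toEmbedding) := by
  simp only [Colex.toColex_le_toColex, Finset.mem_map_equiv]
  constructor
  · rintro (hXY | ⟨b, hb, hbmin⟩) a haX haY
    · exact absurd (mem_sdiff.2 ⟨haX, haY⟩) (by simp [hXY])
    · exact ⟨b, (mem_sdiff.1 hb).1, (mem_sdiff.1 hb).2, hbmin a (mem_sdiff.2 ⟨haX, haY⟩)⟩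
  · intro h
    rcases (X \ Y).eq_empty_or_nonempty with hXY | hXY
    · exact Or.inl hXY
    obtain ⟨haX, haY⟩ := mem_sdiff.1 ((X \ Y).min'_mem hXY)
    obtain ⟨b, hbY, hbX, hba⟩ := h haX haY
    exact Or.inr ⟨b, mem_sdiff.2 ⟨hbY, hbX⟩,
      fun a ha => (OrderDual.toDual_le_toDual.1 hba).trans ((X \ Y).min'_le a ha)⟩

lemma lexLE_trans (hXY : lexLE X Y) (hYW : lexLE Y W) : lexLE X W := by
  rw [lexLE_iff_toColex_le] at *
  exact hXY.trans hYW

lemma lexLE_antisymm (hXY : lexLE X Y) (hYX : lexLE Y X) : X = Y := by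
  rw [lexLE_iff_toColex_le] at hXY hYX
  exact Finset.map_injective _ (toColex.injective (le_antisymm hXY hYX))

lemma lexLE_of_subset (h : X ⊆ Y) : lexLE X Y :=
  Or.inl (sdiff_eq_empty_iff_subset.2 h)

lemma lexLE_insert_insert_iff (hS : c ∉ S) (hU : c ∉ U) :
    lexLE (insert c S) (insert c U) ↔ lexLE S U := by
  simp only [lexLE, insert_sdiff_insert, sdiff_insert_of_notMem hS, sdiff_insert_of_notMem hU]

end Lex

lemma Fin.image_univ_eq_insert_last {α : Type*} [DecidableEq α] {n : ℕ} (f : Fin (n + 1) → α) :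
    Finset.univ.image f =
      insert (f (Fin.last n)) (Finset.univ.image fun i : Fin n => f i.castSucc) := by
  rw [Fin.univ_castSuccEmb, Finset.cons_eq_insert, Finset.image_insert, Finset.map_eq_image,
    Finset.image_image]
  rfl

section Subobjects

variable {C : Type u} [Category.{v} C] {X Y Z : C}

lemma SubOf.refl (X : C) : SubOf X X := ⟨𝟙 X, inferInstance⟩

lemma SubOf.trans (hXY : SubOf X Y) (hYZ : SubOf Y Z) : SubOf X Z := by
  obtain ⟨f, hf⟩ := hXY
  obtain ⟨g, hg⟩ := hYZ
  exact ⟨f ≫ g, mono_comp f g⟩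

lemma SubOf.trans_strictSubOf (hXY : SubOf X Y) (hYZ : StrictSubOf Y Z) : StrictSubOf X Z :=
  ⟨hXY.trans hYZ.1, fun hZX => hYZ.2 (hZX.trans hXY)⟩

lemma not_strictSubOf_of_simple [HasZeroMorphisms C] [Simple X] (hY : ¬ IsZero Y) :
    ¬ StrictSubOf Y X := by
  rintro ⟨⟨f, hf⟩, hXY⟩
  have : IsIso f := (Simple.mono_isIso_iff_nonzero f).2 fun h => hY (IsZero.of_mono_eq_zero f h)
  exact hXY ⟨inv f, inferInstance⟩

namespace IsLengthFunctionCat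

variable [Abelian C] {l : C → ℝ}

lemma eq_add_cokernel (hl : IsLengthFunctionCat l) (f : X ⟶ Y) [Mono f] :
    l Y = l X + l (cokernel f) :=
  hl.2.2 _ ⟨ShortComplex.exact_of_g_is_cokernel
    (ShortComplex.mk f (cokernel.π f) (cokernel.condition f)) (cokernelIsCokernel f)⟩

lemma le_of_subOf (hl : IsLengthFunctionCat l) (h : SubOf X Y) : l X ≤ l Y := by
  obtain ⟨f, hf⟩ := h
  linarith [hl.eq_add_cokernel f, hl.1 (cokernel f)]

lemma lt_of_strictSubOf (hl : IsLengthFunctionCat l) (h : StrictSubOf X Y) : l X < l Y := by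
  obtain ⟨⟨f, hf⟩, hYX⟩ := h
  refine (lt_add_of_pos_right _ ((hl.1 _).lt_of_ne fun h0 => hYX ?_)).trans_eq
    (hl.eq_add_cokernel f).symm
  have : Epi f := Abelian.epi_of_cokernel_π_eq_zero f
    (((hl.2.1 _).1 h0.symm).eq_of_tgt _ _)
  have : IsIso f := isIso_of_mono_of_epi f
  exact ⟨inv f, inferInstance⟩

end IsLengthFunctionCat

end Subobjects

section Chains

open Finset

variable {C : Type u} [Category.{v} C] [Abelian C]

structure IsIndecChain {n : ℕ} (Z : Fin (n + 1) → C) : Prop where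
  indec : ∀ i, Indec (Z i)
  strictSubOf : ∀ i j, i < j → StrictSubOf (Z i) (Z j)

namespace IsIndecChain

variable {n : ℕ}

lemma subOf_last {Z : Fin (n + 1) → C} (hZ : IsIndecChain Z) (i : Fin (n + 1)) :
    SubOf (Z i) (Z (Fin.last n)) := by
  rcases (Fin.le_last i).eq_or_lt with h | h
  · rw [h]; exact SubOf.refl _
  · exact (hZ.strictSubOf _ _ h).1

lemma castSucc {Z : Fin (n + 2) → C} (hZ : IsIndecChain Z) :
    IsIndecChain fun i : Fin (n + 1) => Z i.castSucc :=
  ⟨fun _ => hZ.indec _, fun _ _ h => hZ.strictSubOf _ _ (Fin.castSucc_lt_castSucc_iff.2 h)⟩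

lemma snoc {Z : Fin (n + 1) → C} {X : C} (hZ : IsIndecChain Z) (hX : Indec X)
    (hZX : StrictSubOf (Z (Fin.last n)) X) : IsIndecChain (Fin.snoc Z X : Fin (n + 2) → C) := by
  refine ⟨Fin.lastCases (by simpa using hX) (by simpa using hZ.indec), fun i j hij => ?_⟩
  induction j using Fin.lastCases with
  | last =>
    obtain ⟨i, rfl⟩ := Fin.exists_castSucc_eq.2 hij.ne
    simpa using (hZ.subOf_last i).trans_strictSubOf hZX
  | cast j =>
    obtain ⟨i, rfl⟩ := Fin.exists_castSucc_eq.2 (hij.trans (Fin.castSucc_lt_last j)).ne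
    simpa using hZ.strictSubOf i j (Fin.castSucc_lt_castSucc_iff.1 hij)

end IsIndecChain

end Chains

section GabrielRoiter

open Finset

variable {C : Type u} [Category.{v} C] [Abelian C] {l : C → ℝ} {μ : C → Finset ℝ} {X Y : C}

structure IsGRPredecessor (μ : C → Finset ℝ) (Y X : C) : Prop where
  indec : Indec Y
  strictSubOf : StrictSubOf Y X
  lexLE_measure : ∀ Y', Indec Y' → StrictSubOf Y' X → lexLE (μ Y') (μ Y)

namespace IsGRMeasure

lemma exists_chain (hμ : IsGRMeasure l μ) (hX : Indec X) :
    ∃ (n : ℕ) (Z : Fin (n + 1) → C), IsIndecChain Z ∧ Z (Fin.last n) = X ∧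
      μ X = univ.image fun i => l (Z i) := by
  obtain ⟨⟨n, Z, hind, hchain, hlast, hμX⟩, -⟩ := hμ X hX
  exact ⟨n, Z, ⟨hind, hchain⟩, hlast, hμX⟩

lemma lexLE_of_isIndecChain (hμ : IsGRMeasure l μ) {n : ℕ} {Z : Fin (n + 1) → C}
    (hZ : IsIndecChain Z) : lexLE (univ.image fun i => l (Z i)) (μ (Z (Fin.last n))) :=
  (hμ _ (hZ.indec _)).2 n Z hZ.indec hZ.strictSubOf rfl

lemma le_length_of_mem (hl : IsLengthFunctionCat l) (hμ : IsGRMeasure l μ) (hX : Indec X)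
    {t : ℝ} (ht : t ∈ μ X) : t ≤ l X := by
  obtain ⟨n, Z, hZ, rfl, hμX⟩ := hμ.exists_chain hX
  rw [hμX, mem_image] at ht
  obtain ⟨i, -, rfl⟩ := ht
  exact hl.le_of_subOf (hZ.subOf_last i)

lemma eq_singleton_of_simple (hμ : IsGRMeasure l μ) (hX : Indec X) [Simple X] :
    μ X = {l X} := by
  obtain ⟨n, Z, hZ, hlast, hμX⟩ := hμ.exists_chain hX
  cases n with
  | zero => rw [hμX, ← hlast]; simp
  | succ n =>
    refine absurd ?_ (not_strictSubOf_of_simple (X := X) (hZ.indec 0).1)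
    exact hlast ▸ hZ.strictSubOf 0 (Fin.last _) Fin.last_pos

lemma insert_lexLE_of_isGRPredecessor (hμ : IsGRMeasure l μ) (hX : Indec X)
    (hYX : IsGRPredecessor μ Y X) : lexLE (insert (l X) (μ Y)) (μ X) := by
  obtain ⟨n, W, hW, rfl, hμY⟩ := hμ.exists_chain hYX.indec
  have hchain := hW.snoc hX hYX.strictSubOf
  convert hμ.lexLE_of_isIndecChain hchain using 1
  · rw [Fin.image_univ_eq_insert_last, hμY]
    simp
  · simp

lemma lexLE_insert_of_isGRPredecessor (hl : IsLengthFunctionCat l) (hμ : IsGRMeasure l μ)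
    (hYX : IsGRPredecessor μ Y X) {n : ℕ} {Z : Fin (n + 1) → C} (hZ : IsIndecChain Z)
    (hlast : Z (Fin.last n) = X) :
    lexLE (univ.image fun i => l (Z i)) (insert (l X) (μ Y)) := by
  cases n with
  | zero => exact lexLE_of_subset (by simp [← hlast])
  | succ n =>
    have hlt : ∀ i : Fin (n + 1), StrictSubOf (Z i.castSucc) X := fun i =>
      hlast ▸ hZ.strictSubOf _ _ (Fin.castSucc_lt_last i)
    rw [Fin.image_univ_eq_insert_last, hlast, lexLE_insert_insert_iff]
    · exact lexLE_trans (hμ.lexLE_of_isIndecChain hZ.castSucc)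
        (hYX.lexLE_measure _ (hZ.indec _) (hlt _))
    · simp only [mem_image, mem_univ, true_and, not_exists]
      exact fun i => (hl.lt_of_strictSubOf (hlt i)).ne
    · exact fun h => not_lt.2 (hμ.le_length_of_mem hl hYX.indec h)
        (hl.lt_of_strictSubOf hYX.strictSubOf)

lemma eq_insert_of_isGRPredecessor (hl : IsLengthFunctionCat l) (hμ : IsGRMeasure l μ)
    (hX : Indec X) (hYX : IsGRPredecessor μ Y X) : μ X = insert (l X) (μ Y) := by
  obtain ⟨n, Z, hZ, hlast, hμX⟩ := hμ.exists_chain hX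
  refine lexLE_antisymm ?_ (hμ.insert_lexLE_of_isGRPredecessor hX hYX)
  exact hμX ▸ hμ.lexLE_insert_of_isGRPredecessor hl hYX hZ hlast

end IsGRMeasure

end GabrielRoiter

theorem gr_filtration_measure_general {C : Type u} [Category.{v} C] [Abelian C]
    (l : C → ℝ) (hl : IsLengthFunctionCat l)
    (μ : C → Finset ℝ) (hμ : IsGRMeasure l μ)
    (n : ℕ) (Z : Fin (n + 1) → C)
    (hind : ∀ i, Indec (Z i))
    (hchain : ∀ i j : Fin (n + 1), i < j → StrictSubOf (Z i) (Z j))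
    (hsimple : Simple (Z 0))
    (hpred : ∀ i : Fin n, ∀ Y' : C, Indec Y' → StrictSubOf Y' (Z i.succ) →
      lexLE (μ Y') (μ (Z i.castSucc))) :
    μ (Z (Fin.last n)) = Finset.univ.image fun i => l (Z i) := by
  induction n with
  | zero =>
    rw [show Z (Fin.last 0) = Z 0 from rfl, hμ.eq_singleton_of_simple (hind 0)]
    simp
  | succ n ih =>
    have hZ : IsIndecChain Z := ⟨hind, hchain⟩
    have hYX : IsGRPredecessor μ (Z (Fin.last n).castSucc) (Z (Fin.last (n + 1))) :=
      ⟨hind _, hchain _ _ (Fin.castSucc_lt_last _), hpred (Fin.last n)⟩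
    rw [hμ.eq_insert_of_isGRPredecessor hl (hind _) hYX, Fin.image_univ_eq_insert_last,
      ih _ hZ.castSucc.indec hZ.castSucc.strictSubOf hsimple
        fun i => hpred i.castSucc]

/-- If `X₁ ⊂ X₂ ⊂ ⋯ ⊂ X_{n+1} = X` is a Gabriel-Roiter filtration of `X` (`X₁`
simple, each `Xᵢ` a Gabriel-Roiter predecessor of `Xᵢ₊₁`, i.e. of maximal measure
among proper indecomposable subobjects), then `μ(X) = {ℓ(Xᵢ)}` in `Ch(ℝ)`. -/
theorem gr_filtration_measure {C : Type u} [Category.{v} C] [Abelian C]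
    (hC : IsLengthCategory C) (l : C → ℝ) (hl : IsLengthFunctionCat l)
    (μ : C → Finset ℝ) (hμ : IsGRMeasure l μ)
    (n : ℕ) (Z : Fin (n + 1) → C)
    (hind : ∀ i, Indec (Z i))
    (hchain : ∀ i j : Fin (n + 1), i < j → StrictSubOf (Z i) (Z j))
    (hsimple : Simple (Z 0))
    (hpred : ∀ i : Fin n, ∀ Y' : C, Indec Y' → StrictSubOf Y' (Z i.succ) →
      lexLE (μ Y') (μ (Z i.castSucc))) :
    μ (Z (Fin.last n)) = Finset.univ.image fun i => l (Z i) :=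
  gr_filtration_measure_general l hl μ hμ n Z hind hchain hsimple hpred
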